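/- Let g : (0,∞) → [0,∞) be measurable with ∫₀¹ g(x) dx < ∞, and suppose that g(x) = x^{-γ}·L₁(x) for all x > 1, where γ ∈ (1/2, 1) and L₁ : (0,∞) → ℝ is slowly varying at infinity and bounded away from 0 and ∞ on every interval of the form [1, T]. Then, as h → ∞, ∫₀^∞ g(x)·g(x+h) dx is asymptotically equivalent to (∫₀^∞ y^{-γ}(1+y)^{-γ} dy) · L₁(h)² · h^{1−2γ}, i.e. the ratio of the two sides tends to 1. -/

import Mathlib

/-!
Substituting `x = y h` turns the part of the integral over `x > 1` into
`h ^ (1 - 2γ) L₁(h)² ∫_{y > 1/h} y ^ (-γ) (1 + y) ^ (-γ) · L₁(y h)/L₁(h) · L₁((1 + y) h)/L₁(h) dy`.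
The two ratios tend to `1` pointwise, and Potter's bound `L₁(t h) ≤ K max(t, 1/t) ^ ε L₁(h)`,
a consequence of Karamata's uniform convergence theorem, gives an integrable majorant as soon as
`ε < min (1 - γ) (γ - 1/2)`; dominated convergence yields the constant. The part over `(0, 1]` is
at most `K h ^ (-γ) L₁(h) ∫₀¹ g`, negligible because `h ^ (γ - 1) / L₁(h) → 0`.
-/

open MeasureTheory Set Filter Topology

def SlowlyVarying (L : ℝ → ℝ) : Prop :=
  ∀ t > 0, Tendsto (fun x => L (t * x) / L x) atTop (𝓝 1)

lemma SlowlyVarying.congr {L L' : ℝ → ℝ} (hL : SlowlyVarying L) (h : L =ᶠ[atTop] L') :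
    SlowlyVarying L' := fun t ht =>
  (hL t ht).congr' <| by
    filter_upwards [(tendsto_id.const_mul_atTop ht).eventually h, h] with x hx hx'
    simp only [id] at hx
    rw [hx, hx']

section UniformConvergence

lemma exists_mem_Icc_notMem_of_volume_lt {t : Set ℝ} (ht : volume t < ENNReal.ofReal (1 / 2))
    {u : ℝ} (hu : u ∈ Icc (0 : ℝ) 1) : ∃ w ∈ Icc u 2, w ∉ t ∧ w - u ∉ t := by
  by_contra! h
  have hcover : Icc u 2 ⊆ t ∪ (· + -u) ⁻¹' t := fun w hw => by
    by_cases hwt : w ∈ t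
    · exact Or.inl hwt
    · exact Or.inr (h w hw hwt)
  have : ENNReal.ofReal 1 < ENNReal.ofReal 1 :=
    calc ENNReal.ofReal 1 ≤ volume (Icc u 2) := by
          rw [Real.volume_Icc]; exact ENNReal.ofReal_le_ofReal (by linarith [hu.2])
      _ ≤ volume t + volume ((· + -u) ⁻¹' t) := (measure_mono hcover).trans (measure_union_le _ _)
      _ = volume t + volume t := by rw [measure_preimage_add_right]
      _ < ENNReal.ofReal (1 / 2) + ENNReal.ofReal (1 / 2) := ENNReal.add_lt_add ht ht
      _ = ENNReal.ofReal 1 := by rw [← ENNReal.ofReal_add] <;> norm_num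
  exact lt_irrefl _ this

variable {k : ℝ → ℝ}

-- Egorov: off an exceptional set `t` of measure `≤ 1/4`, both difference quotients are uniformly
-- small on `[0, 2]`; a point `w` with `w, w - u n ∉ t` bridges `x n` and `x n + u n`.
lemma tendsto_add_sub_of_tendsto_atTop (hk : Measurable k)
    (hk_lim : ∀ s, Tendsto (fun x => k (x + s) - k x) atTop (𝓝 0))
    {x u : ℕ → ℝ} (hx : Tendsto x atTop atTop) (hu : ∀ n, u n ∈ Icc (0 : ℝ) 1) :
    Tendsto (fun n => k (x n + u n) - k (x n)) atTop (𝓝 0) := by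
  have hxu : Tendsto (fun n => x n + u n) atTop atTop :=
    tendsto_atTop_mono (fun n => le_add_of_nonneg_right (hu n).1) hx
  set F : ℕ → ℝ → ℝ × ℝ := fun n v =>
    (k (x n + v) - k (x n), k (x n + u n + v) - k (x n + u n))
  have hF_meas : ∀ n, StronglyMeasurable (F n) := fun n =>
    (((hk.comp (measurable_const_add _)).sub_const _).prodMk
      ((hk.comp (measurable_const_add _)).sub_const _)).stronglyMeasurable
  obtain ⟨t, -, -, ht, hunif⟩ := tendstoUniformlyOn_of_ae_tendsto (μ := volume)
    (s := Icc (0 : ℝ) 2) (g := fun _ => ((0 : ℝ), (0 : ℝ))) hF_meas stronglyMeasurable_const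
    measurableSet_Icc (by simp)
    (ae_of_all _ fun v _ => ((hk_lim v).comp hx).prodMk_nhds ((hk_lim v).comp hxu))
    (ε := 1 / 4) (by norm_num)
  have ht' : volume t < ENNReal.ofReal (1 / 2) :=
    ht.trans_lt ((ENNReal.ofReal_lt_ofReal_iff (by norm_num)).2 (by norm_num))
  rw [Metric.tendsto_nhds]
  intro ε hε
  filter_upwards [Metric.tendstoUniformlyOn_iff.1 hunif (ε / 2) (by positivity)] with n hn
  obtain ⟨w, hw, hwt, hwut⟩ := exists_mem_Icc_notMem_of_volume_lt ht' (hu n)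
  have h₁ := (max_lt_iff.1 (hn w ⟨⟨(hu n).1.trans hw.1, hw.2⟩, hwt⟩)).1
  have h₂ := (max_lt_iff.1 (hn (w - u n)
    ⟨⟨sub_nonneg.2 hw.1, by linarith [hw.2, (hu n).1]⟩, hwut⟩)).2
  simp only [F, Real.dist_eq, zero_sub, sub_zero, abs_neg, add_add_sub_cancel] at h₁ h₂ ⊢
  calc |k (x n + u n) - k (x n)|
      ≤ |k (x n + w) - k (x n + u n)| + |k (x n + w) - k (x n)| := by
        rw [abs_sub_comm (k (x n + w))]; exact abs_sub_le _ _ _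
    _ < ε / 2 + ε / 2 := add_lt_add h₂ h₁
    _ = ε := add_halves ε

/-- Karamata's uniform convergence theorem, in additive form. -/
lemma exists_forall_abs_add_sub_le (hk : Measurable k)
    (hk_lim : ∀ s, Tendsto (fun x => k (x + s) - k x) atTop (𝓝 0)) {ε : ℝ} (hε : 0 < ε) :
    ∃ X, ∀ x ≥ X, ∀ u ∈ Icc (0 : ℝ) 1, |k (x + u) - k x| ≤ ε := by
  by_contra! h
  choose x hx u hu hgt using fun n : ℕ => h n
  have hlim := tendsto_add_sub_of_tendsto_atTop hk hk_lim
    (tendsto_atTop_mono hx tendsto_natCast_atTop_atTop) hu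
  obtain ⟨n, hn⟩ := (Metric.tendsto_nhds.1 hlim ε hε).exists
  rw [Real.dist_eq, sub_zero] at hn
  exact (hgt n).not_gt hn

lemma abs_add_sub_le_of_forall_abs_add_sub_le {X ε : ℝ} (hε : 0 ≤ ε)
    (hX : ∀ x ≥ X, ∀ u ∈ Icc (0 : ℝ) 1, |k (x + u) - k x| ≤ ε) {x d : ℝ} (hx : X ≤ x)
    (hd : 0 ≤ d) : |k (x + d) - k x| ≤ ε * d + ε := by
  have step : ∀ n : ℕ, ∀ x ≥ X, ∀ d ∈ Icc (0 : ℝ) (n + 1), |k (x + d) - k x| ≤ (n + 1) * ε := by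
    intro n
    induction n with
    | zero => simpa using hX
    | succ n ih =>
      intro x hx d hd
      rcases le_total d 1 with hd1 | hd1
      · have hstep := hX x hx d ⟨hd.1, hd1⟩
        have hnε : 0 ≤ (n + 1 : ℝ) * ε := by positivity
        push_cast; linarith
      · have h₁ := ih (x + 1) (by linarith) (d - 1)
          ⟨by linarith, by push_cast at hd; linarith [hd.2]⟩
        have h₂ := hX x hx 1 ⟨zero_le_one, le_rfl⟩
        rw [add_add_sub_cancel] at h₁
        calc |k (x + d) - k x| ≤ |k (x + d) - k (x + 1)| + |k (x + 1) - k x| := abs_sub_le _ _ _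
          _ ≤ (n + 1) * ε + ε := add_le_add h₁ h₂
          _ = (↑(n + 1) + 1) * ε := by push_cast; ring
  calc |k (x + d) - k x| ≤ (⌊d⌋₊ + 1) * ε :=
        step _ x hx d ⟨hd, (Nat.lt_floor_add_one d).le⟩
    _ ≤ (d + 1) * ε := by gcongr; exact Nat.floor_le hd
    _ = ε * d + ε := by ring

lemma abs_sub_le_of_forall_abs_add_sub_le {X ε : ℝ} (hε : 0 ≤ ε)
    (hX : ∀ x ≥ X, ∀ u ∈ Icc (0 : ℝ) 1, |k (x + u) - k x| ≤ ε) {a b : ℝ} (ha : X ≤ a)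
    (hb : X ≤ b) : |k b - k a| ≤ ε * |b - a| + ε := by
  rcases le_total a b with hab | hab
  · simpa [abs_of_nonneg (sub_nonneg.2 hab)] using
      abs_add_sub_le_of_forall_abs_add_sub_le hε hX ha (sub_nonneg.2 hab)
  · simpa [abs_sub_comm, abs_of_nonneg (sub_nonneg.2 hab)] using
      abs_add_sub_le_of_forall_abs_add_sub_le hε hX hb (sub_nonneg.2 hab)

end UniformConvergence

lemma max_inv_rpow_eq_exp_mul_abs_log {t : ℝ} (ht : 0 < t) (ε : ℝ) :
    max t t⁻¹ ^ ε = Real.exp (ε * |Real.log t|) := by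
  rw [Real.rpow_def_of_pos (lt_max_of_lt_left ht), mul_comm]
  congr 2
  rcases le_total 1 t with h1 | h1
  · rw [max_eq_left ((inv_le_one_of_one_le₀ h1).trans h1), abs_of_nonneg (Real.log_nonneg h1)]
  · rw [max_eq_right (h1.trans (one_le_inv₀ ht |>.2 h1)), Real.log_inv,
      abs_of_nonpos (Real.log_nonpos ht.le h1)]

lemma max_inv_rpow_of_le_one {t : ℝ} (ht : 0 < t) (ht1 : t ≤ 1) (ε : ℝ) :
    max t t⁻¹ ^ ε = t⁻¹ ^ ε := by
  rw [max_eq_right (ht1.trans (one_le_inv₀ ht |>.2 ht1))]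

section Potter

variable {L : ℝ → ℝ}

theorem potter_bound (hL_meas : Measurable L) (hL_pos : ∀ x, 0 < L x)
    (hL_slow : SlowlyVarying L) {ε : ℝ} (hε : 0 < ε) :
    ∃ X > 0, ∀ x ≥ X, ∀ t > 0, X ≤ t * x → L (t * x) ≤ Real.exp ε * max t t⁻¹ ^ ε * L x := by
  set k : ℝ → ℝ := fun u => Real.log (L (Real.exp u))
  have hk_log : ∀ y > 0, k (Real.log y) = Real.log (L y) := fun y hy => by
    simp only [k, Real.exp_log hy]
  have hk_lim : ∀ s, Tendsto (fun x => k (x + s) - k x) atTop (𝓝 0) := fun s => by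
    have := ((Real.continuousAt_log one_ne_zero).tendsto.comp
      ((hL_slow _ (Real.exp_pos s)).comp Real.tendsto_exp_atTop))
    rw [Real.log_one] at this
    refine this.congr fun x => ?_
    simp only [Function.comp_apply, k, Real.exp_add, mul_comm (Real.exp x)]
    exact Real.log_div (hL_pos _).ne' (hL_pos _).ne'
  have hk_meas : Measurable k := (hL_meas.comp Real.measurable_exp).log
  obtain ⟨X, hX⟩ := exists_forall_abs_add_sub_le hk_meas hk_lim hε
  refine ⟨Real.exp X, Real.exp_pos X, fun x hx t ht htx => ?_⟩
  have hx0 : 0 < x := (Real.exp_pos X).trans_le hx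
  have hlog := abs_sub_le_of_forall_abs_add_sub_le hε.le hX
    ((Real.le_log_iff_exp_le hx0).2 hx) ((Real.le_log_iff_exp_le (by positivity)).2 htx)
  rw [hk_log _ hx0, hk_log _ (by positivity), Real.log_mul ht.ne' hx0.ne', add_sub_cancel_right]
    at hlog
  calc L (t * x) = Real.exp (Real.log (L (t * x))) := (Real.exp_log (hL_pos _)).symm
    _ ≤ Real.exp (ε + ε * |Real.log t| + Real.log (L x)) := by
        gcongr; linarith [(abs_le.1 hlog).2]
    _ = Real.exp ε * max t t⁻¹ ^ ε * L x := by
        rw [Real.exp_add, Real.exp_add, Real.exp_log (hL_pos x),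
          max_inv_rpow_eq_exp_mul_abs_log ht]

lemma le_rpow_mul_of_potter_bound {ε X : ℝ} (hX : 0 < X)
    (hP : ∀ x ≥ X, ∀ t > 0, X ≤ t * x → L (t * x) ≤ Real.exp ε * max t t⁻¹ ^ ε * L x)
    {h : ℝ} (hh : X ≤ h) : L X ≤ Real.exp ε * (h / X) ^ ε * L h := by
  have hh0 : 0 < h := hX.trans_le hh
  have := hP h hh (X / h) (by positivity) (by rw [div_mul_cancel₀ _ hh0.ne'])
  rwa [div_mul_cancel₀ _ hh0.ne', max_inv_rpow_of_le_one (by positivity)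
    ((div_le_one hh0).2 hh), inv_div] at this

theorem exists_le_mul_max_rpow_mul (hL_meas : Measurable L) (hL_pos : ∀ x, 0 < L x)
    (hL_slow : SlowlyVarying L) (hL_bdd : ∀ T, BddAbove (L '' Icc 1 T)) {ε : ℝ} (hε : 0 < ε) :
    ∃ X > 0, ∃ K > 0, ∀ h ≥ X, ∀ t > 0, 1 ≤ t * h → L (t * h) ≤ K * max t t⁻¹ ^ ε * L h := by
  obtain ⟨X, hX, hP⟩ := potter_bound hL_meas hL_pos hL_slow hε
  obtain ⟨C, hC⟩ := hL_bdd X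
  refine ⟨X, hX, max (Real.exp ε) (C * Real.exp ε / L X),
    (Real.exp_pos ε).trans_le (le_max_left _ _), fun h hh t ht hth => ?_⟩
  have hh0 : 0 < h := hX.trans_le hh
  have hM : 0 ≤ max t t⁻¹ ^ ε := by positivity
  rcases le_or_gt X (t * h) with hXth | hthX
  · calc L (t * h) ≤ Real.exp ε * max t t⁻¹ ^ ε * L h := hP h hh t ht hXth
      _ ≤ _ := by gcongr; exacts [(hL_pos h).le, le_max_left _ _]
  · have hCth : L (t * h) ≤ C := hC ⟨t * h, ⟨hth, hthX.le⟩, rfl⟩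
    have hC0 : 0 ≤ C := (hL_pos _).le.trans hCth
    have hhX : h / X ≤ max t t⁻¹ :=
      le_max_of_le_right (by rw [div_le_iff₀ hX, inv_mul_eq_div, le_div_iff₀ ht]; linarith)
    have hLX : L X ≤ Real.exp ε * max t t⁻¹ ^ ε * L h :=
      (le_rpow_mul_of_potter_bound hX hP hh).trans (by gcongr; exact (hL_pos h).le)
    calc L (t * h) ≤ C / L X * L X := by rw [div_mul_cancel₀ _ (hL_pos X).ne']; exact hCth
      _ ≤ C / L X * (Real.exp ε * max t t⁻¹ ^ ε * L h) := by
          gcongr; exact div_nonneg hC0 (hL_pos X).le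
      _ = C * Real.exp ε / L X * max t t⁻¹ ^ ε * L h := by ring
      _ ≤ _ := by gcongr; exacts [(hL_pos h).le, le_max_right _ _]

theorem tendsto_rpow_neg_div_atTop (hL_meas : Measurable L) (hL_pos : ∀ x, 0 < L x)
    (hL_slow : SlowlyVarying L) {δ : ℝ} (hδ : 0 < δ) :
    Tendsto (fun h => h ^ (-δ) / L h) atTop (𝓝 0) := by
  obtain ⟨X, hX, hP⟩ := potter_bound hL_meas hL_pos hL_slow (half_pos hδ)
  set c := Real.exp (δ / 2) / X ^ (δ / 2) / L X
  have hlim : Tendsto (fun h : ℝ => c * h ^ (-(δ / 2))) atTop (𝓝 0) := by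
    simpa using (tendsto_rpow_neg_atTop (half_pos hδ)).const_mul c
  refine tendsto_of_tendsto_of_tendsto_of_le_of_le' tendsto_const_nhds hlim ?_ ?_
  · filter_upwards [eventually_gt_atTop 0] with h hh
    exact div_nonneg (Real.rpow_nonneg hh.le _) (hL_pos h).le
  · filter_upwards [eventually_ge_atTop X] with h hh
    have hh0 : 0 < h := hX.trans_le hh
    have hlow := le_rpow_mul_of_potter_bound hX hP hh
    rw [div_le_iff₀ (hL_pos h)]
    have e : h ^ (-δ) * (h / X) ^ (δ / 2) = h ^ (-(δ / 2)) / X ^ (δ / 2) := by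
      rw [Real.div_rpow hh0.le hX.le, ← mul_div_assoc, ← Real.rpow_add hh0]; ring_nf
    calc h ^ (-δ) = h ^ (-δ) * L X / L X := by field_simp [(hL_pos X).ne']
      _ ≤ h ^ (-δ) * (Real.exp (δ / 2) * (h / X) ^ (δ / 2) * L h) / L X := by
          gcongr; exact (hL_pos X).le
      _ = Real.exp (δ / 2) * (h ^ (-δ) * (h / X) ^ (δ / 2)) * L h / L X := by ring
      _ = c * h ^ (-(δ / 2)) * L h := by rw [e]; ring

end Potter

lemma integrableOn_Ioi_rpow_mul_one_add_rpow {a b : ℝ} (ha : -1 < a) (hab : a + b < -1)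
    (hb : b ≤ 0) : IntegrableOn (fun y : ℝ => y ^ a * (1 + y) ^ b) (Ioi 0) := by
  have hmeas : AEStronglyMeasurable (fun y : ℝ => y ^ a * (1 + y) ^ b) volume := by
    fun_prop
  have hnorm : ∀ y > 0, ‖y ^ a * (1 + y) ^ b‖ = y ^ a * (1 + y) ^ b := fun y hy => by
    rw [Real.norm_of_nonneg (by positivity)]
  rw [← Ioc_union_Ioi_eq_Ioi zero_le_one]
  refine IntegrableOn.union ?_ ?_
  · have hint : IntegrableOn (fun y : ℝ => y ^ a) (Ioc 0 1) := by
      rw [integrableOn_Ioc_iff_integrableOn_Ioo]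
      exact (intervalIntegral.integrableOn_Ioo_rpow_iff zero_lt_one).2 ha
    refine hint.mono' hmeas.restrict ((ae_restrict_iff' measurableSet_Ioc).2 (ae_of_all _ ?_))
    intro y hy
    rw [hnorm y hy.1]
    exact mul_le_of_le_one_right (Real.rpow_nonneg hy.1.le _)
      (Real.rpow_le_one_of_one_le_of_nonpos (by linarith [hy.1]) hb)
  · have hint : IntegrableOn (fun y : ℝ => y ^ (a + b)) (Ioi 1) :=
      (integrableOn_Ioi_rpow_iff zero_lt_one).2 hab
    refine hint.mono' hmeas.restrict ((ae_restrict_iff' measurableSet_Ioi).2 (ae_of_all _ ?_))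
    intro y (hy : 1 < y)
    have hy0 : 0 < y := zero_lt_one.trans hy
    rw [hnorm y hy0, Real.rpow_add hy0]
    exact mul_le_mul_of_nonneg_left (Real.rpow_le_rpow_of_nonpos hy0 (by linarith) hb)
      (by positivity)

lemma integral_rpow_mul_one_add_rpow_pos {γ : ℝ} (hγ : γ ∈ Ioo (1 / 2 : ℝ) 1) :
    0 < ∫ y in Ioi (0 : ℝ), y ^ (-γ) * (1 + y) ^ (-γ) := by
  have hpos : ∀ y ∈ Ioi (0 : ℝ), 0 < y ^ (-γ) * (1 + y) ^ (-γ) := fun y (hy : 0 < y) => by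
    positivity
  rw [setIntegral_pos_iff_support_of_nonneg_ae
    ((ae_restrict_iff' measurableSet_Ioi).2 (ae_of_all _ fun y hy => (hpos y hy).le))
    (integrableOn_Ioi_rpow_mul_one_add_rpow (by linarith [hγ.2]) (by linarith [hγ.1])
      (by linarith [hγ.1])),
    inter_eq_right.2 fun y hy => Function.mem_support.2 (hpos y hy).ne', Real.volume_Ioi]
  exact ENNReal.zero_lt_top

lemma max_inv_rpow_le_rpow_add_rpow_neg {t : ℝ} (ht : 0 < t) {ε : ℝ} (hε : 0 ≤ ε) :
    max t t⁻¹ ^ ε ≤ t ^ ε + t ^ (-ε) := by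
  rw [Real.rpow_max ht.le (inv_nonneg.2 ht.le) hε, Real.inv_rpow ht.le, ← Real.rpow_neg ht.le]
  exact max_le (le_add_of_nonneg_right (by positivity)) (le_add_of_nonneg_left (by positivity))

lemma integrableOn_Ioi_rpow_add_rpow_neg_mul {γ ε : ℝ} (hε : 0 ≤ ε)
    (hγε : γ + ε < 1) (hεγ : ε < γ - 1 / 2) :
    IntegrableOn (fun y : ℝ => (y ^ ε + y ^ (-ε)) * (1 + y) ^ ε * (y ^ (-γ) * (1 + y) ^ (-γ)))
      (Ioi 0) := by
  refine ((integrableOn_Ioi_rpow_mul_one_add_rpow (a := -γ + ε) (b := ε - γ) (by linarith)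
    (by linarith) (by linarith)).add (integrableOn_Ioi_rpow_mul_one_add_rpow (a := -γ - ε)
    (b := ε - γ) (by linarith) (by linarith) (by linarith))).congr_fun
    (fun y (hy : 0 < y) => ?_) measurableSet_Ioi
  simp only [Pi.add_apply, sub_eq_add_neg, Real.rpow_add hy,
    Real.rpow_add (by linarith : 0 < 1 + y)]
  ring

/-- `(h ^ (2γ) / L h ^ 2) · g (y h) g (y h + h)` when `g x = x ^ (-γ) L x` for `x > 1`. -/
noncomputable def rescaledIntegrand (γ : ℝ) (L : ℝ → ℝ) (h y : ℝ) : ℝ :=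
  y ^ (-γ) * (1 + y) ^ (-γ) * (L (y * h) / L h * (L ((1 + y) * h) / L h))

section Autocovariance

variable {γ : ℝ} {g L : ℝ → ℝ}

lemma measurable_rescaledIntegrand (hL_meas : Measurable L) (h : ℝ) :
    Measurable (rescaledIntegrand γ L h) := by
  unfold rescaledIntegrand
  fun_prop

lemma rescaledIntegrand_nonneg (hL_pos : ∀ x, 0 < L x) (h : ℝ) {y : ℝ} (hy : 0 ≤ y) :
    0 ≤ rescaledIntegrand γ L h y := by
  have := hL_pos (y * h); have := hL_pos ((1 + y) * h); have := hL_pos h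
  unfold rescaledIntegrand
  positivity

lemma rescaledIntegrand_le (hL_pos : ∀ x, 0 < L x) {ε X K : ℝ} (hε : 0 ≤ ε) (hK0 : 0 < K)
    (hK : ∀ h ≥ X, ∀ t > 0, 1 ≤ t * h → L (t * h) ≤ K * max t t⁻¹ ^ ε * L h)
    {h y : ℝ} (hh : X ≤ h) (hy : 0 < y) (hyh : 1 ≤ y * h) :
    rescaledIntegrand γ L h y ≤
      K ^ 2 * ((y ^ ε + y ^ (-ε)) * (1 + y) ^ ε * (y ^ (-γ) * (1 + y) ^ (-γ))) := by
  have h1y : 1 ≤ 1 + y := by linarith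
  have hA : L (y * h) / L h ≤ K * (y ^ ε + y ^ (-ε)) := by
    rw [div_le_iff₀ (hL_pos h)]
    calc L (y * h) ≤ K * max y y⁻¹ ^ ε * L h := hK h hh y hy hyh
      _ ≤ K * (y ^ ε + y ^ (-ε)) * L h := by
          gcongr; exacts [(hL_pos h).le, max_inv_rpow_le_rpow_add_rpow_neg hy hε]
  have hB : L ((1 + y) * h) / L h ≤ K * (1 + y) ^ ε := by
    rw [div_le_iff₀ (hL_pos h)]
    have := hK h hh (1 + y) (by linarith) (by nlinarith)
    rwa [max_eq_left ((inv_le_one_of_one_le₀ h1y).trans h1y)] at this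
  calc rescaledIntegrand γ L h y
      ≤ y ^ (-γ) * (1 + y) ^ (-γ) * (K * (y ^ ε + y ^ (-ε)) * (K * (1 + y) ^ ε)) := by
        unfold rescaledIntegrand
        gcongr
        exact div_nonneg (hL_pos _).le (hL_pos _).le
    _ = K ^ 2 * ((y ^ ε + y ^ (-ε)) * (1 + y) ^ ε * (y ^ (-γ) * (1 + y) ^ (-γ))) := by ring

lemma mul_comp_mul_add_eq_rescaledIntegrand (hform : ∀ x > 1, g x = x ^ (-γ) * L x) {h y : ℝ}
    (hh : 0 < h) (hLh : L h ≠ 0) (hy : h⁻¹ < y) :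
    g (y * h) * g (y * h + h) = h ^ (-(2 * γ)) * L h ^ 2 * rescaledIntegrand γ L h y := by
  have hy0 : 0 < y := (inv_pos.2 hh).trans hy
  have hyh : 1 < y * h := (inv_lt_iff_one_lt_mul₀ hh).1 hy
  have h2γ : h ^ (-(2 * γ)) = h ^ (-γ) * h ^ (-γ) := by rw [← Real.rpow_add hh]; ring_nf
  rw [show y * h + h = (1 + y) * h by ring, hform _ hyh, hform _ (by nlinarith),
    Real.mul_rpow hy0.le hh.le, Real.mul_rpow (by linarith) hh.le, h2γ]
  unfold rescaledIntegrand
  field_simp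

lemma integral_Ioi_one_mul_comp_add_eq (hform : ∀ x > 1, g x = x ^ (-γ) * L x) {h : ℝ}
    (hh : 0 < h) (hLh : L h ≠ 0) :
    ∫ x in Ioi 1, g x * g (x + h) =
      h ^ (1 - 2 * γ) * L h ^ 2 *
        ∫ y in Ioi 0, (Ioi h⁻¹).indicator (rescaledIntegrand γ L h) y := by
  have hcv := integral_comp_mul_right_Ioi' (fun x => g x * g (x + h)) h⁻¹ hh
  rw [inv_mul_cancel₀ hh.ne'] at hcv
  rw [setIntegral_indicator measurableSet_Ioi, Ioi_inter_Ioi, sup_of_le_right (inv_pos.2 hh).le,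
    ← hcv, setIntegral_congr_fun measurableSet_Ioi
      fun y hy => mul_comp_mul_add_eq_rescaledIntegrand hform hh hLh hy,
    integral_const_mul, smul_eq_mul, sub_eq_add_neg, Real.rpow_add hh, Real.rpow_one]
  ring

lemma integrableOn_Ioi_one_mul_comp_add (hform : ∀ x > 1, g x = x ^ (-γ) * L x) {h : ℝ}
    (hh : 0 < h) (hLh : L h ≠ 0)
    (hint : IntegrableOn ((Ioi h⁻¹).indicator (rescaledIntegrand γ L h)) (Ioi 0)) :
    IntegrableOn (fun x => g x * g (x + h)) (Ioi 1) := by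
  rw [IntegrableOn, integrable_indicator_iff measurableSet_Ioi, IntegrableOn,
    Measure.restrict_restrict measurableSet_Ioi, Ioi_inter_Ioi,
    sup_of_le_left (inv_pos.2 hh).le] at hint
  have hcomp : IntegrableOn (fun y => g (y * h) * g (y * h + h)) (Ioi h⁻¹) :=
    IntegrableOn.congr_fun (hint.const_mul (h ^ (-(2 * γ)) * L h ^ 2))
      (fun y hy => (mul_comp_mul_add_eq_rescaledIntegrand hform hh hLh hy).symm) measurableSet_Ioi
  simpa [inv_mul_cancel₀ hh.ne'] using
    (integrableOn_Ioi_comp_mul_right_iff (fun x => g x * g (x + h)) h⁻¹ hh).1 hcomp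

lemma exists_integrableOn_bound_indicator_rescaledIntegrand (hγ : γ ∈ Ioo (1 / 2 : ℝ) 1)
    (hL_meas : Measurable L) (hL_pos : ∀ x, 0 < L x) (hL_slow : SlowlyVarying L)
    (hL_bdd : ∀ T, BddAbove (L '' Icc 1 T)) :
    ∃ G : ℝ → ℝ, IntegrableOn G (Ioi 0) ∧ ∀ᶠ h in atTop, ∀ y ∈ Ioi (0 : ℝ),
      ‖(Ioi h⁻¹).indicator (rescaledIntegrand γ L h) y‖ ≤ G y := by
  obtain ⟨hγ₁, hγ₂⟩ := hγ
  obtain ⟨ε, hε, hγε, hεγ⟩ : ∃ ε, 0 < ε ∧ γ + ε < 1 ∧ ε < γ - 1 / 2 :=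
    ⟨min (1 - γ) (γ - 1 / 2) / 2, by linarith [lt_min (sub_pos.2 hγ₂) (sub_pos.2 hγ₁)],
      by linarith [min_le_left (1 - γ) (γ - 1 / 2)], by linarith [min_le_right (1 - γ) (γ - 1 / 2)]⟩
  obtain ⟨X, -, K, hK0, hK⟩ := exists_le_mul_max_rpow_mul hL_meas hL_pos hL_slow hL_bdd hε
  refine ⟨_, (integrableOn_Ioi_rpow_add_rpow_neg_mul hε.le hγε hεγ).const_mul (K ^ 2), ?_⟩
  filter_upwards [eventually_ge_atTop X, eventually_gt_atTop 0] with h hh hh0 y (hy : 0 < y)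
  by_cases hyh : y ∈ Ioi h⁻¹
  · rw [indicator_of_mem hyh, Real.norm_of_nonneg (rescaledIntegrand_nonneg hL_pos h hy.le)]
    exact rescaledIntegrand_le hL_pos hε.le hK0 hK hh hy ((inv_lt_iff_one_lt_mul₀ hh0).1 hyh).le
  · rw [indicator_of_notMem hyh, norm_zero]
    positivity

theorem tendsto_integral_indicator_rescaledIntegrand (hγ : γ ∈ Ioo (1 / 2 : ℝ) 1)
    (hL_meas : Measurable L) (hL_pos : ∀ x, 0 < L x) (hL_slow : SlowlyVarying L)
    (hL_bdd : ∀ T, BddAbove (L '' Icc 1 T)) :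
    Tendsto (fun h => ∫ y in Ioi 0, (Ioi h⁻¹).indicator (rescaledIntegrand γ L h) y) atTop
      (𝓝 (∫ y in Ioi 0, y ^ (-γ) * (1 + y) ^ (-γ))) := by
  obtain ⟨G, hG, hbound⟩ :=
    exists_integrableOn_bound_indicator_rescaledIntegrand hγ hL_meas hL_pos hL_slow hL_bdd
  refine tendsto_integral_filter_of_dominated_convergence G ?_
    (hbound.mono fun h hh => (ae_restrict_iff' measurableSet_Ioi).2 (ae_of_all _ hh)) hG
    ((ae_restrict_iff' measurableSet_Ioi).2 (ae_of_all _ fun y (hy : 0 < y) => ?_))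
  · exact Eventually.of_forall fun h =>
      ((measurable_rescaledIntegrand hL_meas h).indicator measurableSet_Ioi).aestronglyMeasurable
  · have hlim := ((hL_slow y hy).mul (hL_slow (1 + y) (by linarith))).const_mul
      (y ^ (-γ) * (1 + y) ^ (-γ))
    rw [mul_one, mul_one] at hlim
    refine hlim.congr' ?_
    filter_upwards [eventually_gt_atTop y⁻¹] with h hh
    exact (indicator_of_mem ((inv_lt_comm₀ hy ((inv_pos.2 hy).trans hh)).1 hh)
      (rescaledIntegrand γ L h)).symm

lemma integral_Ioc_mul_comp_add_le (hg_meas : Measurable g) (hg_nonneg : ∀ x ∈ Ioi (0 : ℝ), 0 ≤ g x)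
    (hg_int01 : IntegrableOn g (Ioc 0 1)) {h B : ℝ} (hh : 0 ≤ h)
    (hB : ∀ x ∈ Ioc (0 : ℝ) 1, g (x + h) ≤ B) :
    IntegrableOn (fun x => g x * g (x + h)) (Ioc 0 1) ∧
      ∫ x in Ioc 0 1, g x * g (x + h) ≤ B * ∫ x in Ioc 0 1, g x := by
  have hle : ∀ x ∈ Ioc (0 : ℝ) 1, ‖g x * g (x + h)‖ ≤ B * g x := fun x hx => by
    have hgx := hg_nonneg x hx.1
    rw [Real.norm_of_nonneg (mul_nonneg hgx (hg_nonneg _ (by linarith [hx.1] : 0 < x + h))),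
      mul_comm B]
    exact mul_le_mul_of_nonneg_left (hB x hx) hgx
  have hint : IntegrableOn (fun x => g x * g (x + h)) (Ioc 0 1) :=
    (hg_int01.const_mul B).mono'
      (hg_meas.mul (hg_meas.comp (measurable_add_const h))).aestronglyMeasurable
      ((ae_restrict_iff' measurableSet_Ioc).2 (ae_of_all _ hle))
  refine ⟨hint, ?_⟩
  rw [← integral_const_mul]
  exact setIntegral_mono_on hint (hg_int01.const_mul B) measurableSet_Ioc
    fun x hx => (Real.le_norm_self _).trans (hle x hx)

lemma exists_forall_comp_add_le (hγ : 0 ≤ γ) (hform : ∀ x > 1, g x = x ^ (-γ) * L x)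
    (hL_meas : Measurable L) (hL_pos : ∀ x, 0 < L x) (hL_slow : SlowlyVarying L)
    (hL_bdd : ∀ T, BddAbove (L '' Icc 1 T)) :
    ∃ K, ∀ᶠ h in atTop, ∀ x ∈ Ioc (0 : ℝ) 1, g (x + h) ≤ K * (h ^ (-γ) * L h) := by
  obtain ⟨X, -, K, hK0, hK⟩ := exists_le_mul_max_rpow_mul hL_meas hL_pos hL_slow hL_bdd one_pos
  refine ⟨2 * K, ?_⟩
  filter_upwards [eventually_ge_atTop X, eventually_ge_atTop 1] with h hh h1 x hx
  have hh0 : 0 < h := one_pos.trans_le h1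
  have ht : 1 ≤ (x + h) / h := (one_le_div hh0).2 (by linarith [hx.1])
  have hL : L (x + h) ≤ K * (2 * L h) := by
    have := hK h hh ((x + h) / h) (one_pos.trans_le ht)
      (by rw [div_mul_cancel₀ _ hh0.ne']; linarith [hx.1])
    rw [div_mul_cancel₀ _ hh0.ne', max_eq_left ((inv_le_one_of_one_le₀ ht).trans ht),
      Real.rpow_one] at this
    refine this.trans ?_
    rw [mul_assoc]
    gcongr
    · exact (hL_pos h).le
    · rw [div_le_iff₀ hh0]; linarith [hx.2]
  rw [hform _ (by linarith [hx.1])]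
  calc (x + h) ^ (-γ) * L (x + h) ≤ h ^ (-γ) * (K * (2 * L h)) :=
        mul_le_mul (Real.rpow_le_rpow_of_nonpos hh0 (by linarith [hx.1]) (by linarith)) hL
          (hL_pos _).le (by positivity)
    _ = 2 * K * (h ^ (-γ) * L h) := by ring

theorem tendsto_integral_Ioc_mul_comp_add_div (hγ : γ ∈ Ico (0 : ℝ) 1) (hg_meas : Measurable g)
    (hg_nonneg : ∀ x ∈ Ioi (0 : ℝ), 0 ≤ g x) (hg_int01 : IntegrableOn g (Ioc 0 1))
    (hform : ∀ x > 1, g x = x ^ (-γ) * L x) (hL_meas : Measurable L) (hL_pos : ∀ x, 0 < L x)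
    (hL_slow : SlowlyVarying L) (hL_bdd : ∀ T, BddAbove (L '' Icc 1 T)) :
    Tendsto (fun h => (∫ x in Ioc 0 1, g x * g (x + h)) / (L h ^ 2 * h ^ (1 - 2 * γ))) atTop
      (𝓝 0) := by
  obtain ⟨K, hK⟩ := exists_forall_comp_add_le hγ.1 hform hL_meas hL_pos hL_slow hL_bdd
  have hlim : Tendsto (fun h => (K * ∫ x in Ioc 0 1, g x) * (h ^ (-(1 - γ)) / L h)) atTop
      (𝓝 0) := by
    simpa using (tendsto_rpow_neg_div_atTop hL_meas hL_pos hL_slow (sub_pos.2 hγ.2)).const_mul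
      (K * ∫ x in Ioc 0 1, g x)
  refine squeeze_zero' ?_ ?_ hlim
  · filter_upwards [eventually_gt_atTop 0] with h hh
    refine div_nonneg (setIntegral_nonneg measurableSet_Ioc fun x hx => mul_nonneg
      (hg_nonneg x hx.1) (hg_nonneg _ (by linarith [hx.1] : 0 < x + h))) ?_
    have := hL_pos h
    positivity
  · filter_upwards [hK, eventually_gt_atTop 0] with h hKh hh
    have hLh := hL_pos h
    rw [div_le_iff₀ (by positivity)]
    calc ∫ x in Ioc 0 1, g x * g (x + h) ≤ K * (h ^ (-γ) * L h) * ∫ x in Ioc 0 1, g x :=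
          (integral_Ioc_mul_comp_add_le hg_meas hg_nonneg hg_int01 hh.le hKh).2
      _ = (K * ∫ x in Ioc 0 1, g x) * (h ^ (-(1 - γ)) / L h) * (L h ^ 2 * h ^ (1 - 2 * γ)) := by
          rw [show -γ = -(1 - γ) + (1 - 2 * γ) by ring, Real.rpow_add hh]
          field_simp

theorem tendsto_integral_mul_comp_add_div (hγ : γ ∈ Ioo (1 / 2 : ℝ) 1) (hg_meas : Measurable g)
    (hg_nonneg : ∀ x ∈ Ioi (0 : ℝ), 0 ≤ g x) (hg_int01 : IntegrableOn g (Ioc 0 1))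
    (hform : ∀ x > 1, g x = x ^ (-γ) * L x) (hL_meas : Measurable L) (hL_pos : ∀ x, 0 < L x)
    (hL_slow : SlowlyVarying L) (hL_bdd : ∀ T, BddAbove (L '' Icc 1 T)) :
    Tendsto (fun h => (∫ x in Ioi 0, g x * g (x + h)) / (L h ^ 2 * h ^ (1 - 2 * γ))) atTop
      (𝓝 (∫ y in Ioi 0, y ^ (-γ) * (1 + y) ^ (-γ))) := by
  have hγ₀ : γ ∈ Ico (0 : ℝ) 1 := ⟨by linarith [hγ.1], hγ.2⟩
  obtain ⟨K, hK⟩ := exists_forall_comp_add_le hγ₀.1 hform hL_meas hL_pos hL_slow hL_bdd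
  obtain ⟨G, hG, hbound⟩ :=
    exists_integrableOn_bound_indicator_rescaledIntegrand hγ hL_meas hL_pos hL_slow hL_bdd
  have hlim := (tendsto_integral_Ioc_mul_comp_add_div hγ₀ hg_meas hg_nonneg hg_int01 hform
    hL_meas hL_pos hL_slow hL_bdd).add
    (tendsto_integral_indicator_rescaledIntegrand hγ hL_meas hL_pos hL_slow hL_bdd)
  rw [zero_add] at hlim
  refine hlim.congr' ?_
  filter_upwards [hK, hbound, eventually_gt_atTop 0] with h hKh hGh hh
  have hLh := (hL_pos h).ne'
  have hint₁ := (integral_Ioc_mul_comp_add_le hg_meas hg_nonneg hg_int01 hh.le hKh).1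
  have hint₂ := integrableOn_Ioi_one_mul_comp_add hform hh hLh <|
    hG.mono'
      ((measurable_rescaledIntegrand hL_meas h).indicator measurableSet_Ioi).aestronglyMeasurable
      ((ae_restrict_iff' measurableSet_Ioi).2 (ae_of_all _ hGh))
  have hsplit : ∫ x in Ioi 0, g x * g (x + h) =
      (∫ x in Ioc 0 1, g x * g (x + h)) + ∫ x in Ioi 1, g x * g (x + h) := by
    rw [← Ioc_union_Ioi_eq_Ioi zero_le_one,
      setIntegral_union (Ioc_disjoint_Ioi le_rfl) measurableSet_Ioi hint₁ hint₂]
  rw [hsplit, integral_Ioi_one_mul_comp_add_eq hform hh hLh]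
  have := Real.rpow_pos_of_pos hh (1 - 2 * γ)
  field_simp

end Autocovariance

/-- Recovers `L` from `g x = x ^ (-γ) * L x` on `(1, ∞)`; the value `1` elsewhere keeps it
measurable and positive, which `L` itself need not be. -/
noncomputable def slowlyVaryingPart (γ : ℝ) (g : ℝ → ℝ) (x : ℝ) : ℝ :=
  if 1 < x then x ^ γ * g x else 1

lemma measurable_slowlyVaryingPart {γ : ℝ} {g : ℝ → ℝ} (hg : Measurable g) :
    Measurable (slowlyVaryingPart γ g) :=
  Measurable.ite (measurableSet_lt measurable_const measurable_id) (by fun_prop) measurable_const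

lemma slowlyVaryingPart_eq {γ : ℝ} {g L : ℝ → ℝ} (hform : ∀ x > 1, g x = x ^ (-γ) * L x) {x : ℝ}
    (hx : 1 < x) : slowlyVaryingPart γ g x = L x := by
  rw [slowlyVaryingPart, if_pos hx, hform x hx, ← mul_assoc, ← Real.rpow_add (by linarith),
    add_neg_cancel, Real.rpow_zero, one_mul]

lemma slowlyVaryingPart_pos {γ : ℝ} {g L : ℝ → ℝ} (hform : ∀ x > 1, g x = x ^ (-γ) * L x)
    (hL_bdd : ∀ T ≥ (1 : ℝ), ∃ c C : ℝ, 0 < c ∧ ∀ x ∈ Icc (1 : ℝ) T, c ≤ L x ∧ L x ≤ C) (x : ℝ) :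
    0 < slowlyVaryingPart γ g x := by
  by_cases hx : 1 < x
  · obtain ⟨c, _, hc, hbd⟩ := hL_bdd x hx.le
    exact slowlyVaryingPart_eq hform hx ▸ hc.trans_le (hbd x ⟨hx.le, le_rfl⟩).1
  · simp [slowlyVaryingPart, hx]

lemma bddAbove_slowlyVaryingPart_image_Icc {γ : ℝ} {g L : ℝ → ℝ}
    (hform : ∀ x > 1, g x = x ^ (-γ) * L x)
    (hL_bdd : ∀ T ≥ (1 : ℝ), ∃ c C : ℝ, 0 < c ∧ ∀ x ∈ Icc (1 : ℝ) T, c ≤ L x ∧ L x ≤ C) (T : ℝ) :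
    BddAbove (slowlyVaryingPart γ g '' Icc 1 T) := by
  obtain ⟨_, C, _, hbd⟩ := hL_bdd (max T 1) (le_max_right _ _)
  refine ⟨max C 1, forall_mem_image.2 fun x hx => ?_⟩
  rcases hx.1.eq_or_lt with rfl | hx1
  · simp [slowlyVaryingPart]
  · exact slowlyVaryingPart_eq hform hx1 ▸
      (hbd x ⟨hx.1, hx.2.trans (le_max_left _ _)⟩).2.trans (le_max_left _ _)

/-- Proposition (long-run asymptotics, case γ ∈ (1/2,1)): if `g(x) = x^(-γ) L₁(x)` for `x > 1`
with `L₁` slowly varying at infinity, then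
`∫₀^∞ g(x) g(x+h) dx ~ (∫₀^∞ y^(-γ)(1+y)^(-γ) dy) · L₁(h)² · h^(1-2γ)` as `h → ∞`. -/
theorem bss_acf_long_memory_asymptotics
    (γ : ℝ) (hγ : γ ∈ Ioo (1/2 : ℝ) 1)
    (g L₁ : ℝ → ℝ)
    (hg_meas : Measurable g)
    (hg_nonneg : ∀ x ∈ Ioi (0:ℝ), 0 ≤ g x)
    (hg_int01 : IntegrableOn g (Ioc 0 1))
    (hform : ∀ x > (1:ℝ), g x = x ^ (-γ) * L₁ x)
    (hL₁_slow : ∀ t > (0:ℝ), Tendsto (fun x => L₁ (t * x) / L₁ x) atTop (nhds 1))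
    (hL₁_bdd : ∀ T ≥ (1:ℝ), ∃ c Cu : ℝ, 0 < c ∧ ∀ x ∈ Icc (1:ℝ) T, c ≤ L₁ x ∧ L₁ x ≤ Cu) :
    Tendsto
      (fun h => (∫ x in Ioi (0:ℝ), g x * g (x + h)) /
        ((∫ y in Ioi (0:ℝ), y ^ (-γ) * (1 + y) ^ (-γ)) * (L₁ h) ^ 2 * h ^ (1 - 2 * γ)))
      atTop (nhds 1) := by
  set L := slowlyVaryingPart γ g
  have hL_eq : ∀ x > 1, L x = L₁ x := fun x hx => slowlyVaryingPart_eq hform hx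
  have hL_slow : SlowlyVarying L :=
    SlowlyVarying.congr hL₁_slow ((eventually_gt_atTop 1).mono fun x hx => (hL_eq x hx).symm)
  have hlim := (tendsto_integral_mul_comp_add_div (L := L) hγ hg_meas hg_nonneg hg_int01
    (fun x hx => hL_eq x hx ▸ hform x hx) (measurable_slowlyVaryingPart hg_meas)
    (slowlyVaryingPart_pos hform hL₁_bdd) hL_slow
    (bddAbove_slowlyVaryingPart_image_Icc hform hL₁_bdd)).div_const
    (∫ y in Ioi (0:ℝ), y ^ (-γ) * (1 + y) ^ (-γ))
  rw [div_self (integral_rpow_mul_one_add_rpow_pos hγ).ne'] at hlim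
  refine hlim.congr' ((eventually_gt_atTop 1).mono fun h hh => ?_)
  dsimp only
  rw [hL_eq h hh, div_div]
  congr 1
  ring
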